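/- arXiv:1712.06022 — 6 statements merged into one kernel-verified Lean document; each statement's English description precedes it below -/
import Mathlib

section
/- Let S be a monoid and let d : S → ℕ satisfy d(1) = 0 and d(s·t) = d(s) + d(t) for all s, t ∈ S. Suppose S is the union of finitely many sandwiches a_i⟨w_i⟩b_i (i = 1, …, k) such that for each i either w_i = 1 or d(w_i) ≥ 1. Then there is a constant C such that for every n the set {s ∈ S : d(s) ≤ n} has at most C·(n+1) elements. -/
/-!
A sandwich `a⟨w⟩b` contributes at most `n + 1` elements of degree `≤ n`: if `w = 1` it is the
single element `a * b`, and otherwise `d (a * w ^ m * b) ≥ m * d w ≥ m` forces `m ≤ n`.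
Summing over the `k` sandwiches gives the bound `k * (n + 1)`.
-/

/-- The sandwich `a⟨w⟩b = {a * w^n * b : n ∈ ℕ}` in a monoid. -/
def sandwich {S : Type*} [Monoid S] (a w b : S) : Set S :=
  Set.range fun n : ℕ => a * w ^ n * b

section Degree

variable {S : Type*} [Monoid S] {d : S → ℕ}

lemma degree_pow (hd : ∀ s t : S, d (s * t) = d s + d t) (x : S) (m : ℕ) :
    d (x ^ m) = m * d x := by
  induction m with
  | zero =>
    have := hd 1 1
    rw [one_mul] at this
    simp only [pow_zero, zero_mul]
    omega
  | succ m ih => rw [pow_succ, hd, ih, Nat.succ_mul]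

lemma pow_exponent_mul_degree_le (hd : ∀ s t : S, d (s * t) = d s + d t) (a w b : S) (m : ℕ) :
    m * d w ≤ d (a * w ^ m * b) := by
  rw [hd, hd, degree_pow hd]
  omega

variable {a w b : S}

lemma sandwich_inter_degree_le_subset_image (hd : ∀ s t : S, d (s * t) = d s + d t)
    (hw : w = 1 ∨ 1 ≤ d w) (n : ℕ) :
    sandwich a w b ∩ {s | d s ≤ n} ⊆ (fun m => a * w ^ m * b) '' Set.Iic n := by
  rintro _ ⟨⟨m, rfl⟩, hm⟩
  rcases hw with rfl | hw
  · exact ⟨0, Nat.zero_le n, by simp⟩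
  · refine ⟨m, ?_, rfl⟩
    calc m ≤ m * d w := Nat.le_mul_of_pos_right m hw
      _ ≤ d (a * w ^ m * b) := pow_exponent_mul_degree_le hd a w b m
      _ ≤ n := hm

lemma finite_sandwich_inter_degree_le (hd : ∀ s t : S, d (s * t) = d s + d t)
    (hw : w = 1 ∨ 1 ≤ d w) (n : ℕ) : (sandwich a w b ∩ {s | d s ≤ n}).Finite :=
  ((Set.finite_Iic n).image _).subset (sandwich_inter_degree_le_subset_image hd hw n)

lemma ncard_sandwich_inter_degree_le (hd : ∀ s t : S, d (s * t) = d s + d t)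
    (hw : w = 1 ∨ 1 ≤ d w) (n : ℕ) : (sandwich a w b ∩ {s | d s ≤ n}).ncard ≤ n + 1 :=
  calc (sandwich a w b ∩ {s | d s ≤ n}).ncard
      ≤ ((fun m => a * w ^ m * b) '' Set.Iic n).ncard :=
        Set.ncard_le_ncard (sandwich_inter_degree_le_subset_image hd hw n)
          ((Set.finite_Iic n).image _)
    _ ≤ (Set.Iic n).ncard := Set.ncard_image_le (Set.finite_Iic n)
    _ = n + 1 := Set.ncard_Iic_nat n

end Degree

theorem finite_union_of_sandwiches_linear_growth_general
    {S : Type*} [Monoid S] (d : S → ℕ)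
    (hdmul : ∀ s t : S, d (s * t) = d s + d t)
    (k : ℕ) (a w b : Fin k → S)
    (hw : ∀ i, w i = 1 ∨ 1 ≤ d (w i))
    (hcover : (Set.univ : Set S) = ⋃ i, sandwich (a i) (w i) (b i)) :
    ∃ C : ℕ, ∀ n : ℕ, {s : S | d s ≤ n}.Finite ∧
      {s : S | d s ≤ n}.ncard ≤ C * (n + 1) := by
  refine ⟨k, fun n => ?_⟩
  have hsplit : {s : S | d s ≤ n} = ⋃ i, sandwich (a i) (w i) (b i) ∩ {s | d s ≤ n} := by
    rw [← Set.iUnion_inter, ← hcover, Set.univ_inter]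
  rw [hsplit]
  refine ⟨Set.finite_iUnion fun i => finite_sandwich_inter_degree_le hdmul (hw i) n, ?_⟩
  calc (⋃ i, sandwich (a i) (w i) (b i) ∩ {s | d s ≤ n}).ncard
      ≤ ∑ i, (sandwich (a i) (w i) (b i) ∩ {s | d s ≤ n}).ncard :=
        Set.ncard_iUnion_le_of_fintype _
    _ ≤ ∑ _i : Fin k, (n + 1) :=
        Finset.sum_le_sum fun i _ => ncard_sandwich_inter_degree_le hdmul (hw i) n
    _ = k * (n + 1) := by simp

theorem finite_union_of_sandwiches_linear_growth
    {S : Type*} [Monoid S] (d : S → ℕ)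
    (hd1 : d 1 = 0) (hdmul : ∀ s t : S, d (s * t) = d s + d t)
    (k : ℕ) (a w b : Fin k → S)
    (hw : ∀ i, w i = 1 ∨ 1 ≤ d (w i))
    (hcover : (Set.univ : Set S) = ⋃ i, sandwich (a i) (w i) (b i)) :
    ∃ C : ℕ, ∀ n : ℕ, {s : S | d s ≤ n}.Finite ∧
      {s : S | d s ≤ n}.ncard ≤ C * (n + 1) :=
  finite_union_of_sandwiches_linear_growth_general d hdmul k a w b hw hcover
end

section
/- Let Z be a subset of the free monoid on an alphabet α. If Z is a finite union of sandwiches, then Z can be written as a finite disjoint union of sandwiches, i.e., there exist finitely many sandwiches a_1⟨w_1⟩b_1, …, a_N⟨w_N⟩b_N that are pairwise disjoint and whose union is Z. -/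
namespace SandwichAux
variable {α : Type*}

lemma len_pow (w : FreeMonoid α) (n : ℕ) : (w^n).length = n * w.length := by
  induction n with
  | zero => simp
  | succ k ih => rw [pow_succ, FreeMonoid.length_mul, ih]; ring

lemma len_swd (a w b : FreeMonoid α) (n : ℕ) :
    (a * w^n * b).length = a.length + n * w.length + b.length := by
  rw [FreeMonoid.length_mul, FreeMonoid.length_mul, len_pow]

lemma len_pos {w : FreeMonoid α} (hw : w ≠ 1) : 0 < w.length := by
  rcases Nat.eq_zero_or_pos w.length with h | h
  · exact absurd (FreeMonoid.length_eq_zero.mp h) hw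
  · exact h

lemma sw_inj {a w b : FreeMonoid α} (hw : w ≠ 1) {m m' : ℕ}
    (h : a * w^m * b = a * w^m' * b) : m = m' := by
  have hL := congrArg FreeMonoid.length h
  rw [len_swd, len_swd] at hL
  have hl := len_pos hw
  have : m * w.length = m' * w.length := by omega
  exact Nat.eq_of_mul_eq_mul_right hl this

lemma split {x b z d : FreeMonoid α} (h : x * b = z * d) :
    (∃ y, z = x*y ∧ b = y*d) ∨ (∃ y, x = z*y ∧ d = y*b) := by
  have h' : x.toList ++ b.toList = z.toList ++ d.toList := congrArg FreeMonoid.toList h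
  rcases List.append_eq_append_iff.mp h' with ⟨y, hy1, hy2⟩ | ⟨y, hy1, hy2⟩
  · exact Or.inl ⟨FreeMonoid.ofList y, FreeMonoid.toList.injective (by simpa using hy1),
      FreeMonoid.toList.injective (by simpa using hy2)⟩
  · exact Or.inr ⟨FreeMonoid.ofList y, FreeMonoid.toList.injective (by simpa using hy1),
      FreeMonoid.toList.injective (by simpa using hy2)⟩

lemma expand1 (c v d y b : FreeMonoid α) (n1 k : ℕ) (hd : d = y*b) :
    c*v^(n1+k)*d = (c*v^n1)*((v^k*y)*b) := by
  rw [pow_add, hd]; simp [mul_assoc]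

lemma expand2 (a w b c v y : FreeMonoid α) (m1 j n1 : ℕ) (hz : a*w^m1 = c*v^n1*y) :
    a*w^(m1+j)*b = (c*v^n1)*((y*w^j)*b) := by
  rw [pow_add, ← mul_assoc a, hz]; simp [mul_assoc]

lemma key_periodic (a w b c v d : FreeMonoid α) (hw : w ≠ 1) :
    ∃ p, 0 < p ∧ ∃ N, ∀ m, N ≤ m →
      ((a*w^m*b ∈ sandwich c v d) ↔ (a*w^(m+p)*b ∈ sandwich c v d)) := by
  by_cases h2 : ∃ m1 m2 : ℕ, m1 < m2 ∧ a*w^m1*b ∈ sandwich c v d ∧ a*w^m2*b ∈ sandwich c v d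
  case neg =>
    refine ⟨1, one_pos, ?_⟩
    by_cases hex : ∃ m, a*w^m*b ∈ sandwich c v d
    · obtain ⟨m0, hm0⟩ := hex
      refine ⟨m0+1, fun m hm => iff_of_false ?_ ?_⟩
      · intro hmem; exact h2 ⟨m0, m, by omega, hm0, hmem⟩
      · intro hmem; exact h2 ⟨m0, m+1, by omega, hm0, hmem⟩
    · exact ⟨0, fun m _ => iff_of_false (fun hm => hex ⟨m, hm⟩) (fun hm => hex ⟨_, hm⟩)⟩
  case pos =>
    obtain ⟨m1, m2, hlt, ⟨n1, e1⟩, ⟨n2, e2⟩⟩ := h2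
    have hv : v ≠ 1 := by
      rintro rfl
      have heq : a*w^m1*b = a*w^m2*b := by rw [← e1, ← e2]; simp
      exact absurd (sw_inj hw heq) (Nat.ne_of_lt hlt)
    have hlv := len_pos hv
    have hlw := len_pos hw
    obtain ⟨p, rfl⟩ : ∃ p, m2 = m1 + (p+1) := ⟨m2 - m1 - 1, by omega⟩
    have hlen1 := congrArg FreeMonoid.length e1
    have hlen2 := congrArg FreeMonoid.length e2
    rw [len_swd, len_swd] at hlen1 hlen2
    have hn : n1 < n2 := by
      by_contra hn
      push_neg at hn
      have h1 : n2 * v.length ≤ n1 * v.length := Nat.mul_le_mul_right _ hn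
      have h2 : m1 * w.length < (m1 + (p+1)) * w.length :=
        (Nat.mul_lt_mul_right hlw).mpr (by omega)
      omega
    obtain ⟨q, rfl⟩ : ∃ q, n2 = n1 + (q+1) := ⟨n2 - n1 - 1, by omega⟩
    rw [Nat.add_mul n1 (q+1), Nat.add_mul m1 (p+1)] at hlen2
    have hpq : (q+1) * v.length = (p+1) * w.length := by omega
    -- helper: for any solution with m1 ≤ m, the n is ≥ n1
    have hmn : ∀ m n, c*v^n*d = a*w^m*b → m1 ≤ m → n1 ≤ n := by
      intro m n e hm
      have hlen := congrArg FreeMonoid.length e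
      rw [len_swd, len_swd] at hlen
      by_contra hn'
      push_neg at hn'
      have h1 : n * v.length < n1 * v.length := (Nat.mul_lt_mul_right hlv).mpr hn'
      have h2 : m1 * w.length ≤ m * w.length := Nat.mul_le_mul_right _ hm
      omega
    refine ⟨p+1, Nat.succ_pos p, m1, ?_⟩
    rcases split e1 with ⟨y, hz, hd⟩ | ⟨y, hz, hb⟩
    · -- hz : a*w^m1 = c*v^n1*y, hd : d = y*b
      have key : v^(q+1)*y = y*w^(p+1) := by
        have h3 : (c*v^n1) * ((v^(q+1)*y) * b) = (c*v^n1) * ((y*w^(p+1)) * b) := by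
          rw [← expand1 c v d y b n1 (q+1) hd, ← expand2 a w b c v y m1 (p+1) n1 hz]
          exact e2
        exact mul_right_cancel (mul_left_cancel h3)
      have main : ∀ j, (a*w^(m1+j)*b ∈ sandwich c v d) ↔ ∃ k, v^k*y = y*w^j := by
        intro j
        constructor
        · rintro ⟨n, e⟩
          have hn1 : n1 ≤ n := hmn (m1+j) n e (by omega)
          obtain ⟨k, rfl⟩ : ∃ k, n = n1 + k := ⟨n - n1, by omega⟩
          refine ⟨k, ?_⟩
          have h3 : (c*v^n1) * ((v^k*y) * b) = (c*v^n1) * ((y*w^j) * b) := by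
            rw [← expand1 c v d y b n1 k hd, ← expand2 a w b c v y m1 j n1 hz]
            exact e
          exact mul_right_cancel (mul_left_cancel h3)
        · rintro ⟨k, hk⟩
          refine ⟨n1 + k, ?_⟩
          show c*v^(n1+k)*d = a*w^(m1+j)*b
          rw [expand1 c v d y b n1 k hd, expand2 a w b c v y m1 j n1 hz, hk]
      intro m hm
      obtain ⟨j, rfl⟩ : ∃ j, m = m1 + j := ⟨m - m1, by omega⟩
      have harr : m1 + j + (p+1) = m1 + (j + (p+1)) := by omega
      rw [harr, main j, main (j + (p+1))]
      constructor
      · rintro ⟨k, hk⟩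
        refine ⟨k + (q+1), ?_⟩
        rw [pow_add v k (q+1), pow_add w j (p+1), mul_assoc (v^k), key, ← mul_assoc,
          hk, mul_assoc]
      · rintro ⟨k', hk'⟩
        have hstep : (v^k'*y).length = (y*w^(j+(p+1))).length := congrArg _ hk'
        rw [FreeMonoid.length_mul, FreeMonoid.length_mul, len_pow, len_pow,
          add_mul] at hstep
        have hk'q : q+1 ≤ k' := by
          by_contra hc
          push_neg at hc
          have h1 : k' * v.length < (q+1) * v.length := (Nat.mul_lt_mul_right hlv).mpr hc
          omega
        obtain ⟨k, rfl⟩ : ∃ k, k' = k + (q+1) := ⟨k' - (q+1), by omega⟩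
        refine ⟨k, ?_⟩
        have h3 : (v^k*y) * w^(p+1) = (y*w^j) * w^(p+1) := by
          rw [mul_assoc y, ← pow_add w j (p+1), ← hk', pow_add v k (q+1),
            mul_assoc (v^k), mul_assoc (v^k), key]
        exact mul_right_cancel h3
    · -- hz : c*v^n1 = a*w^m1*y, hb : b = y*d
      have key : w^(p+1)*y = y*v^(q+1) := by
        have h3 : (a*w^m1) * ((w^(p+1)*y) * d) = (a*w^m1) * ((y*v^(q+1)) * d) := by
          rw [← expand1 a w b y d m1 (p+1) hb, ← expand2 c v d a w y n1 (q+1) m1 hz]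
          exact e2.symm
        exact mul_right_cancel (mul_left_cancel h3)
      have main : ∀ j, (a*w^(m1+j)*b ∈ sandwich c v d) ↔ ∃ k, w^j*y = y*v^k := by
        intro j
        constructor
        · rintro ⟨n, e⟩
          have hn1 : n1 ≤ n := hmn (m1+j) n e (by omega)
          obtain ⟨k, rfl⟩ : ∃ k, n = n1 + k := ⟨n - n1, by omega⟩
          refine ⟨k, ?_⟩
          have h3 : (a*w^m1) * ((w^j*y) * d) = (a*w^m1) * ((y*v^k) * d) := by
            rw [← expand1 a w b y d m1 j hb, ← expand2 c v d a w y n1 k m1 hz]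
            exact e.symm
          exact mul_right_cancel (mul_left_cancel h3)
        · rintro ⟨k, hk⟩
          refine ⟨n1 + k, ?_⟩
          show c*v^(n1+k)*d = a*w^(m1+j)*b
          rw [expand1 a w b y d m1 j hb, expand2 c v d a w y n1 k m1 hz, hk]
      intro m hm
      obtain ⟨j, rfl⟩ : ∃ j, m = m1 + j := ⟨m - m1, by omega⟩
      have harr : m1 + j + (p+1) = m1 + (j + (p+1)) := by omega
      rw [harr, main j, main (j + (p+1))]
      constructor
      · rintro ⟨k, hk⟩
        refine ⟨k + (q+1), ?_⟩
        rw [pow_add w j (p+1), pow_add v k (q+1), mul_assoc (w^j), key, ← mul_assoc,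
          hk, mul_assoc]
      · rintro ⟨k', hk'⟩
        have hstep : (w^(j+(p+1))*y).length = (y*v^k').length := congrArg _ hk'
        rw [FreeMonoid.length_mul, FreeMonoid.length_mul, len_pow, len_pow,
          add_mul] at hstep
        have hk'q : q+1 ≤ k' := by
          by_contra hc
          push_neg at hc
          have h1 : k' * v.length < (q+1) * v.length := (Nat.mul_lt_mul_right hlv).mpr hc
          omega
        obtain ⟨k, rfl⟩ : ∃ k, k' = k + (q+1) := ⟨k' - (q+1), by omega⟩
        refine ⟨k, ?_⟩
        have h3 : (w^j*y) * v^(q+1) = (y*v^k) * v^(q+1) := by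
          rw [mul_assoc y, ← pow_add v k (q+1), ← hk', pow_add w j (p+1),
            mul_assoc (w^j), mul_assoc (w^j), key]
        exact mul_right_cancel h3


def sand (t : FreeMonoid α × FreeMonoid α × FreeMonoid α) : Set (FreeMonoid α) :=
  sandwich t.1 t.2.1 t.2.2

def swU (l : List (FreeMonoid α × FreeMonoid α × FreeMonoid α)) : Set (FreeMonoid α) :=
  {x | ∃ t ∈ l, x ∈ sand t}

lemma swU_nil : swU ([] : List (FreeMonoid α × FreeMonoid α × FreeMonoid α)) = ∅ := by
  ext x; simp [swU]

lemma mem_swU_cons {t : FreeMonoid α × FreeMonoid α × FreeMonoid α} {l x} :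
    x ∈ swU (t :: l) ↔ x ∈ sand t ∨ x ∈ swU l := by simp [swU]

lemma mem_swU_append {l1 l2 : List (FreeMonoid α × FreeMonoid α × FreeMonoid α)} {x} :
    x ∈ swU (l1 ++ l2) ↔ x ∈ swU l1 ∨ x ∈ swU l2 := by
  simp only [swU, Set.mem_setOf_eq, List.mem_append]
  constructor
  · rintro ⟨t, ht | ht, hx⟩
    · exact Or.inl ⟨t, ht, hx⟩
    · exact Or.inr ⟨t, ht, hx⟩
  · rintro (⟨t, ht, hx⟩ | ⟨t, ht, hx⟩)
    · exact ⟨t, Or.inl ht, hx⟩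
    · exact ⟨t, Or.inr ht, hx⟩

lemma sand_subset_swU {t : FreeMonoid α × FreeMonoid α × FreeMonoid α}
    {l : List (FreeMonoid α × FreeMonoid α × FreeMonoid α)} (h : t ∈ l) :
    sand t ⊆ swU l := fun x hx => ⟨t, h, hx⟩

lemma period_mul {P : ℕ → Prop} {p N : ℕ} (h : ∀ m, N ≤ m → (P m ↔ P (m+p))) :
    ∀ k m, N ≤ m → (P m ↔ P (m + k*p)) := by
  intro k
  induction k with
  | zero => simp
  | succ i ih =>
    intro m hm
    rw [ih m hm, h (m + i*p) (by omega), show m + i*p + p = m + (i+1)*p from by ring]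

lemma list_periodic (a w b : FreeMonoid α) (hw : w ≠ 1)
    (l : List (FreeMonoid α × FreeMonoid α × FreeMonoid α)) :
    ∃ p, 0 < p ∧ ∃ N, ∀ m, N ≤ m → (a*w^m*b ∈ swU l ↔ a*w^(m+p)*b ∈ swU l) := by
  induction l with
  | nil => exact ⟨1, one_pos, 0, fun m _ => by simp [swU]⟩
  | cons t l ih =>
    obtain ⟨p1, hp1, N1, h1⟩ := key_periodic a w b t.1 t.2.1 t.2.2 hw
    obtain ⟨p2, hp2, N2, h2⟩ := ih
    refine ⟨p1*p2, Nat.mul_pos hp1 hp2, max N1 N2, fun m hm => ?_⟩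
    rw [mem_swU_cons, mem_swU_cons]
    have e1 : (a*w^m*b ∈ sand t) ↔ (a*w^(m+p1*p2)*b ∈ sand t) := by
      have := period_mul h1 p2 m (le_trans (le_max_left _ _) hm)
      rwa [mul_comm p2 p1] at this
    have e2 : (a*w^m*b ∈ swU l) ↔ (a*w^(m+p1*p2)*b ∈ swU l) :=
      period_mul h2 p1 m (le_trans (le_max_right _ _) hm)
    exact or_congr e1 e2

lemma sandwich_one (a b : FreeMonoid α) : sandwich a 1 b = {a*b} := by
  ext x; simp [sandwich, eq_comm]

lemma shift_eq (a w b : FreeMonoid α) (r p k : ℕ) :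
    (a*w^r)*(w^p)^k*b = a*w^(r+p*k)*b := by
  rw [← pow_mul, mul_assoc a, ← pow_add]

lemma diff (a w b : FreeMonoid α) (l : List (FreeMonoid α × FreeMonoid α × FreeMonoid α)) :
    ∃ m : List (FreeMonoid α × FreeMonoid α × FreeMonoid α),
      List.Pairwise (fun s t => Disjoint (sand s) (sand t)) m ∧
      swU m = sandwich a w b \ swU l := by
  classical
  by_cases hw : w = 1
  · subst hw
    by_cases hab : (a*b : FreeMonoid α) ∈ swU l
    · refine ⟨[], List.Pairwise.nil, ?_⟩
      rw [swU_nil, sandwich_one]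
      exact (Set.diff_eq_empty.mpr (Set.singleton_subset_iff.mpr hab)).symm
    · refine ⟨[(a,1,b)], List.pairwise_singleton _ _, ?_⟩
      have h1 : swU [(a,1,b)] = ({a*b} : Set (FreeMonoid α)) := by
        ext x; simp [swU, sand, sandwich_one]
      rw [h1, sandwich_one]
      ext x
      simp only [Set.mem_diff, Set.mem_singleton_iff]
      constructor
      · intro h; exact ⟨h, fun hx => hab (h ▸ hx)⟩
      · rintro ⟨rfl, _⟩; rfl
  · obtain ⟨p, hp, N, hper⟩ := list_periodic a w b hw l
    have hperC : ∀ m, N ≤ m → ((a*w^m*b ∉ swU l) ↔ (a*w^(m+p)*b ∉ swU l)) :=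
      fun m hm => not_congr (hper m hm)
    set C : ℕ → Prop := fun m => a*w^m*b ∉ swU l with hC
    set l1 : List (FreeMonoid α × FreeMonoid α × FreeMonoid α) :=
      ((List.range N).filter (fun m => decide (C m))).map (fun m => (a*w^m, 1, b)) with hl1
    set l2 : List (FreeMonoid α × FreeMonoid α × FreeMonoid α) :=
      ((List.range p).filter (fun r => decide (C (N+r)))).map
        (fun r => (a*w^(N+r), w^p, b)) with hl2
    have hmem1 : ∀ x, x ∈ swU l1 ↔ ∃ m0, m0 < N ∧ C m0 ∧ a*w^m0*b = x := by
      intro x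
      simp only [swU, hl1, Set.mem_setOf_eq, List.mem_map, List.mem_filter,
        List.mem_range, decide_eq_true_eq]
      constructor
      · rintro ⟨t, ⟨m0, ⟨hm0, hc⟩, rfl⟩, hx⟩
        rw [sand, sandwich_one] at hx
        exact ⟨m0, hm0, hc, hx.symm⟩
      · rintro ⟨m0, hm0, hc, rfl⟩
        exact ⟨_, ⟨m0, ⟨hm0, hc⟩, rfl⟩, by rw [sand, sandwich_one]; rfl⟩
    have hmem2 : ∀ x, x ∈ swU l2 ↔ ∃ r, r < p ∧ C (N+r) ∧ ∃ k, a*w^(N+r+p*k)*b = x := by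
      intro x
      simp only [swU, hl2, Set.mem_setOf_eq, List.mem_map, List.mem_filter,
        List.mem_range, decide_eq_true_eq]
      constructor
      · rintro ⟨t, ⟨r, ⟨hr, hc⟩, rfl⟩, k, hx⟩
        have hx' : (a*w^(N+r))*(w^p)^k*b = x := hx
        rw [shift_eq] at hx'
        exact ⟨r, hr, hc, k, hx'⟩
      · rintro ⟨r, hr, hc, k, rfl⟩
        exact ⟨_, ⟨r, ⟨hr, hc⟩, rfl⟩, k, shift_eq a w b (N+r) p k⟩
    refine ⟨l1 ++ l2, ?_, ?_⟩
    · -- pairwise disjointness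
      have hss : ∀ m0 m0' : ℕ, m0 ≠ m0' →
          Disjoint (sand (a*w^m0,1,b)) (sand (a*w^m0',(1:FreeMonoid α),b)) := by
        intro m0 m0' hne
        rw [Set.disjoint_left]
        intro x hx hx'
        rw [sand, sandwich_one, Set.mem_singleton_iff] at hx hx'
        exact hne (sw_inj hw (hx ▸ hx'))
      have hsa : ∀ m0 r : ℕ, m0 < N →
          Disjoint (sand (a*w^m0,1,b)) (sand (a*w^(N+r),w^p,b)) := by
        intro m0 r hm0
        rw [Set.disjoint_left]
        intro x hx hx'
        rw [sand, sandwich_one, Set.mem_singleton_iff] at hx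
        obtain ⟨k, hk⟩ := hx'
        have hk2 : (a*w^(N+r))*(w^p)^k*b = x := hk
        rw [shift_eq] at hk2
        have := sw_inj hw (hx ▸ hk2)
        omega
      have haa : ∀ r r' : ℕ, r < p → r' < p → r ≠ r' →
          Disjoint (sand (a*w^(N+r),w^p,b)) (sand (a*w^(N+r'),w^p,b)) := by
        intro r r' hr hr' hne
        rw [Set.disjoint_left]
        intro x hx hx'
        obtain ⟨k, hk⟩ := hx
        obtain ⟨k', hk'⟩ := hx'
        have hk2 : (a*w^(N+r))*(w^p)^k*b = x := hk
        have hk2' : (a*w^(N+r'))*(w^p)^k'*b = x := hk'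
        rw [shift_eq] at hk2 hk2'
        have heq := sw_inj hw (hk2.trans hk2'.symm)
        have h0 : r + p*k = r' + p*k' := by omega
        have h1 : (r + p*k) % p = (r' + p*k') % p := by rw [h0]
        rw [Nat.add_mul_mod_self_left, Nat.add_mul_mod_self_left,
          Nat.mod_eq_of_lt hr, Nat.mod_eq_of_lt hr'] at h1
        exact hne h1
      rw [List.pairwise_append]
      refine ⟨?_, ?_, ?_⟩
      · rw [hl1, List.pairwise_map]
        exact (((List.pairwise_lt_range (n := N)).filter _).imp
          (fun h => hss _ _ (Nat.ne_of_lt h)))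
      · rw [hl2, List.pairwise_map]
        have h0 : ((List.range p).filter (fun r => decide (C (N+r)))).Pairwise
            (fun r r' => r ∈ (List.range p).filter (fun r => decide (C (N+r))) ∧
              r' ∈ (List.range p).filter (fun r => decide (C (N+r))) ∧ r < r') :=
          List.Pairwise.and_mem.mp ((List.pairwise_lt_range (n := p)).filter _)
        refine h0.imp ?_
        rintro r r' ⟨hr, hr', hlt⟩
        rw [List.mem_filter, List.mem_range] at hr hr'
        exact haa _ _ hr.1 hr'.1 (Nat.ne_of_lt hlt)
      · intro x hx y hy
        rw [hl1, List.mem_map] at hx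
        rw [hl2, List.mem_map] at hy
        obtain ⟨m0, hm0, rfl⟩ := hx
        obtain ⟨r, hr, rfl⟩ := hy
        rw [List.mem_filter, List.mem_range] at hm0
        exact hsa _ _ hm0.1
    · -- union equality
      ext x
      rw [mem_swU_append, hmem1, hmem2]
      constructor
      · rintro (⟨m0, hm0N, hc, rfl⟩ | ⟨r, hrp, hc, k, rfl⟩)
        · exact ⟨⟨m0, rfl⟩, hc⟩
        · refine ⟨⟨N+r+p*k, rfl⟩, ?_⟩
          have := period_mul hperC k (N+r) (by omega)
          rw [mul_comm k p] at this
          exact (this.mp hc)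
      · rintro ⟨⟨n, rfl⟩, hn⟩
        by_cases hnN : n < N
        · exact Or.inl ⟨n, hnN, hn, rfl⟩
        · right
          have hmd := Nat.mod_add_div (n-N) p
          have hcomm : ((n-N)/p)*p = p*((n-N)/p) := Nat.mul_comm _ _
          have harr : N + (n-N)%p + p*((n-N)/p) = n := by omega
          refine ⟨(n-N) % p, Nat.mod_lt _ hp, ?_, (n-N)/p, by rw [harr]⟩
          have hkey := period_mul hperC ((n-N)/p) (N + (n-N)%p) (by omega)
          have he : N + (n-N)%p + ((n-N)/p)*p = n := by omega
          rw [he] at hkey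
          exact hkey.mpr hn

lemma disjoint_list (l : List (FreeMonoid α × FreeMonoid α × FreeMonoid α)) :
    ∃ m : List (FreeMonoid α × FreeMonoid α × FreeMonoid α),
      List.Pairwise (fun s t => Disjoint (sand s) (sand t)) m ∧ swU m = swU l := by
  induction l with
  | nil => exact ⟨[], List.Pairwise.nil, rfl⟩
  | cons t l ih =>
    obtain ⟨m, hm, hUm⟩ := ih
    obtain ⟨m', hm', hUm'⟩ := diff t.1 t.2.1 t.2.2 m
    refine ⟨m' ++ m, ?_, ?_⟩
    · rw [List.pairwise_append]
      refine ⟨hm', hm, fun x hx y hy => ?_⟩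
      have h1 : sand x ⊆ swU m' := sand_subset_swU hx
      have h2 : sand y ⊆ swU m := sand_subset_swU hy
      rw [hUm'] at h1
      exact Set.disjoint_left.mpr (fun z hz hz' => (h1 hz).2 (h2 hz'))
    · ext x
      rw [mem_swU_append, hUm', hUm, mem_swU_cons]
      have : sand t = sandwich t.1 t.2.1 t.2.2 := rfl
      rw [← this]
      constructor
      · rintro (⟨h1, _⟩ | h2)
        · exact Or.inl h1
        · exact Or.inr h2
      · rintro (h1 | h2)
        · by_cases hx : x ∈ swU l
          · exact Or.inr hx
          · exact Or.inl ⟨h1, hx⟩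
        · exact Or.inr h2

end SandwichAux

theorem finite_union_sandwiches_to_disjoint_union
    {α : Type*} (Z : Set (FreeMonoid α))
    (h : ∃ (s : ℕ) (a w b : Fin s → FreeMonoid α),
      Z = ⋃ i, sandwich (a i) (w i) (b i)) :
    ∃ (N : ℕ) (a w b : Fin N → FreeMonoid α),
      (∀ i j, i ≠ j →
        Disjoint (sandwich (a i) (w i) (b i)) (sandwich (a j) (w j) (b j))) ∧
      Z = ⋃ i, sandwich (a i) (w i) (b i) := by
  classical
  obtain ⟨s, a, w, b, rfl⟩ := h
  set l : List (FreeMonoid α × FreeMonoid α × FreeMonoid α) :=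
    (List.finRange s).map (fun i => (a i, w i, b i)) with hl
  have hUl : SandwichAux.swU l = ⋃ i, sandwich (a i) (w i) (b i) := by
    ext x
    simp only [SandwichAux.swU, hl, Set.mem_setOf_eq, List.mem_map, List.mem_finRange,
      Set.mem_iUnion, true_and]
    constructor
    · rintro ⟨t, ⟨i, rfl⟩, hx⟩
      exact ⟨i, hx⟩
    · rintro ⟨i, hx⟩
      exact ⟨(a i, w i, b i), ⟨i, rfl⟩, hx⟩
  obtain ⟨m, hm, hUm⟩ := SandwichAux.disjoint_list l
  refine ⟨m.length, fun i => (m.get i).1, fun i => (m.get i).2.1, fun i => (m.get i).2.2,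
    ?_, ?_⟩
  · intro i j hij
    have hpg := List.pairwise_iff_get.mp hm
    rcases lt_or_gt_of_ne hij with hlt | hgt
    · exact hpg i j hlt
    · exact (hpg j i hgt).symm
  · rw [← hUl, ← hUm]
    ext x
    simp only [Set.mem_iUnion]
    constructor
    · rintro ⟨t, ht, hx⟩
      obtain ⟨i, rfl⟩ := List.mem_iff_get.mp ht
      exact ⟨i, hx⟩
    · rintro ⟨i, hx⟩
      exact ⟨m.get i, m.get_mem i, hx⟩
end

section
/- Let Z be a subset of the free monoid on an alphabet α that is a finite union of sandwiches. Then there exist a finite subset F of Z and finitely many sandwiches a_1⟨w_1⟩b_1, …, a_N⟨w_N⟩b_N with w_i ≠ 1 for all i, such that F and the sandwiches a_i⟨w_i⟩b_i are pairwise disjoint and their union is Z; moreover each of these sandwiches is free (the map n ↦ a_i * w_i^n * b_i is injective). -/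
/-!
Pull a sandwich `a⟨w⟩b` with `w ≠ 1` back along the injective map `n ↦ a * w ^ n * b`. By
Levi's lemma on words, the exponents landing in another sandwich form a set that contains, with
`m` and `m + d`, the whole progression `m + k * d`; such a set is eventually periodic (beyond its
smallest gap it is a single progression), hence so is the preimage of any finite union of
sandwiches. Adding the sandwiches one at a time to an already decomposed `Z`, the new part
`a⟨w⟩b \ Z` is the image of an eventually periodic set of exponents, that is a finite set
together with the free sandwiches `(a * w ^ (M + r))⟨w ^ d⟩b` for the residues `r` it contains
modulo its period `d`.
-/

open Set Filter Function

def EventuallyPeriodic (s : Set ℕ) : Prop :=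
  ∃ d, 0 < d ∧ ∀ᶠ n in atTop, n + d ∈ s ↔ n ∈ s

namespace EventuallyPeriodic

lemma eventually_forall_add_mul_mem_iff {s : Set ℕ} {d : ℕ}
    (h : ∀ᶠ n in atTop, n + d ∈ s ↔ n ∈ s) :
    ∀ᶠ n in atTop, ∀ k, n + k * d ∈ s ↔ n ∈ s := by
  obtain ⟨M, hM⟩ := eventually_atTop.1 h
  refine eventually_atTop.2 ⟨M, fun n hn k => ?_⟩
  induction k with
  | zero => simp
  | succ k ih => rw [Nat.succ_mul, ← add_assoc, hM _ (by omega), ih]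

lemma compl {s : Set ℕ} (hs : EventuallyPeriodic s) : EventuallyPeriodic sᶜ := by
  obtain ⟨d, hd, h⟩ := hs
  exact ⟨d, hd, h.mono fun n hn => not_congr hn⟩

lemma union {s t : Set ℕ} (hs : EventuallyPeriodic s) (ht : EventuallyPeriodic t) :
    EventuallyPeriodic (s ∪ t) := by
  obtain ⟨d, hd, hs⟩ := hs
  obtain ⟨e, he, ht⟩ := ht
  refine ⟨e * d, by positivity, ?_⟩
  filter_upwards [eventually_forall_add_mul_mem_iff hs, eventually_forall_add_mul_mem_iff ht]
    with n hsn htn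
  rw [mem_union, mem_union, hsn, mul_comm, htn]

lemma of_finite {s : Set ℕ} (hs : s.Finite) : EventuallyPeriodic s := by
  have h : ∀ᶠ n in atTop, n ∉ s := Nat.cofinite_eq_atTop ▸ hs.eventually_cofinite_notMem
  refine ⟨1, one_pos, ?_⟩
  filter_upwards [h, (tendsto_add_atTop_nat 1).eventually h] with n hn hn1
  exact iff_of_false hn1 hn

lemma biUnion {ι : Type*} {I : Set ι} (hI : I.Finite) {s : ι → Set ℕ}
    (hs : ∀ i ∈ I, EventuallyPeriodic (s i)) : EventuallyPeriodic (⋃ i ∈ I, s i) := by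
  induction I, hI using Set.Finite.induction_on with
  | empty => simpa using of_finite finite_empty
  | @insert i I _ _ ih =>
    rw [biUnion_insert]
    exact (hs i (mem_insert i I)).union (ih fun j hj => hs j (mem_insert_of_mem i hj))

lemma of_add_mul_mem {T : Set ℕ} (hT : ∀ m d, m ∈ T → m + d ∈ T → ∀ k, m + k * d ∈ T) :
    EventuallyPeriodic T := by
  classical
  rcases T.finite_or_infinite with hfin | hinf
  · exact of_finite hfin
  have hgap : ∃ p, 0 < p ∧ ∃ m ∈ T, m + p ∈ T := by
    obtain ⟨m, hm⟩ := hinf.nonempty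
    obtain ⟨n, hn, hmn⟩ := hinf.exists_gt m
    exact ⟨n - m, by omega, m, hm, by rwa [Nat.add_sub_cancel' hmn.le]⟩
  obtain ⟨p, ⟨hp, m, hm, hmp⟩, hmin⟩ : ∃ p, (0 < p ∧ ∃ m ∈ T, m + p ∈ T) ∧
      ∀ q < p, ¬(0 < q ∧ ∃ m ∈ T, m + q ∈ T) :=
    ⟨_, Nat.find_spec hgap, fun _ => Nat.find_min hgap⟩
  -- Beyond `m`, the elements of `T` are exactly `m + p ℕ`: any other one would lie strictly
  -- between two consecutive terms of that progression, at distance less than `p`.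
  have key : ∀ n, m ≤ n → (n ∈ T ↔ p ∣ n - m) := by
    intro n hmn
    constructor
    · intro hn
      by_contra hndvd
      have hr : 0 < (n - m) % p := Nat.pos_of_ne_zero fun h => hndvd (Nat.dvd_of_mod_eq_zero h)
      have hrp := Nat.mod_lt (n - m) hp
      refine hmin (p - (n - m) % p) (by omega) ⟨by omega, n, hn, ?_⟩
      have hdiv := Nat.mod_add_div (n - m) p
      convert hT m p hm hmp ((n - m) / p + 1) using 1
      rw [add_mul, one_mul, mul_comm]
      omega
    · rintro ⟨k, hk⟩
      have := hT m p hm hmp k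
      rwa [mul_comm, ← hk, Nat.add_sub_cancel' hmn] at this
  refine ⟨p, hp, (eventually_ge_atTop m).mono fun n hmn => ?_⟩
  rw [key n hmn, key (n + p) (by omega), Nat.sub_add_comm hmn, Nat.dvd_add_self_right]

lemma exists_eq_union_progressions {s : Set ℕ} (hs : EventuallyPeriodic s) :
    ∃ M d, 0 < d ∧
      s = s ∩ Iio M ∪ ⋃ r ∈ {r | r < d ∧ M + r ∈ s}, range fun k => M + r + d * k := by
  obtain ⟨d, hd, h⟩ := hs
  obtain ⟨M, hM⟩ := eventually_atTop.1 (eventually_forall_add_mul_mem_iff h)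
  refine ⟨M, d, hd, ext fun n => ?_⟩
  simp only [mem_union, mem_inter_iff, mem_Iio, mem_iUnion, mem_range, mem_ofPred_eq, exists_prop]
  constructor
  · intro hn
    by_cases hnM : n < M
    · exact .inl ⟨hn, hnM⟩
    have hdiv := Nat.mod_add_div (n - M) d
    refine .inr ⟨(n - M) % d, ⟨Nat.mod_lt _ hd, ?_⟩, (n - M) / d, by omega⟩
    rwa [← hM _ (by omega) ((n - M) / d), mul_comm, add_assoc, hdiv,
      Nat.add_sub_cancel' (by omega)]
  · rintro (⟨hn, -⟩ | ⟨r, ⟨-, hr⟩, k, rfl⟩)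
    · exact hn
    · rwa [mul_comm, hM _ (by omega)]

end EventuallyPeriodic

section Monoid

variable {S : Type*} [Monoid S]

lemma sandwich_one (a b : S) : sandwich a 1 b = {a * b} := by
  simp [sandwich]

lemma ne_one_of_injective_sandwich {a w b : S} (h : Injective fun n : ℕ => a * w ^ n * b) :
    w ≠ 1 := by
  rintro rfl
  exact zero_ne_one (h (by simp))

lemma mul_pow_mul_pow_pow_mul (a w b : S) (m d k : ℕ) :
    a * w ^ m * (w ^ d) ^ k * b = a * w ^ (m + d * k) * b := by
  rw [pow_add, pow_mul, mul_assoc a]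

lemma sandwich_mul_pow_pow (a w b : S) (m d : ℕ) :
    sandwich (a * w ^ m) (w ^ d) b = (fun n => a * w ^ n * b) '' range fun k => m + d * k := by
  rw [← range_comp, sandwich]
  simp only [mul_pow_mul_pow_pow_mul, comp_def]

structure IsFreeSandwichDecomposition (Z F : Set S) (P : Set (S × S × S)) : Prop where
  finite_part : F.Finite
  finite_triples : P.Finite
  injective : ∀ t ∈ P, Injective fun n : ℕ => t.1 * t.2.1 ^ n * t.2.2
  pairwiseDisjoint : P.PairwiseDisjoint fun t => sandwich t.1 t.2.1 t.2.2
  disjoint : Disjoint F (⋃ t ∈ P, sandwich t.1 t.2.1 t.2.2)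
  eq_union : Z = F ∪ ⋃ t ∈ P, sandwich t.1 t.2.1 t.2.2

namespace IsFreeSandwichDecomposition

variable {Z Y F G : Set S} {P Q : Set (S × S × S)}

lemma of_finite (hF : F.Finite) : IsFreeSandwichDecomposition F F ∅ where
  finite_part := hF
  finite_triples := finite_empty
  injective := by simp
  pairwiseDisjoint := pairwiseDisjoint_empty
  disjoint := by simp
  eq_union := by simp

lemma union (hZ : IsFreeSandwichDecomposition Z F P) (hY : IsFreeSandwichDecomposition Y G Q)
    (hZY : Disjoint Z Y) : IsFreeSandwichDecomposition (Z ∪ Y) (F ∪ G) (P ∪ Q) := by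
  have hFZ : F ⊆ Z := hZ.eq_union ▸ subset_union_left
  have hGY : G ⊆ Y := hY.eq_union ▸ subset_union_left
  have hPZ : (⋃ t ∈ P, sandwich t.1 t.2.1 t.2.2) ⊆ Z := hZ.eq_union ▸ subset_union_right
  have hQY : (⋃ t ∈ Q, sandwich t.1 t.2.1 t.2.2) ⊆ Y := hY.eq_union ▸ subset_union_right
  refine ⟨hZ.finite_part.union hY.finite_part, hZ.finite_triples.union hY.finite_triples,
    fun t ht => ht.elim (hZ.injective t) (hY.injective t), ?_, ?_, ?_⟩
  · refine hZ.pairwiseDisjoint.union hY.pairwiseDisjoint fun t ht u hu _ => ?_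
    exact hZY.mono ((subset_biUnion_of_mem ht).trans hPZ) ((subset_biUnion_of_mem hu).trans hQY)
  · rw [biUnion_union, disjoint_union_left, disjoint_union_right, disjoint_union_right]
    exact ⟨⟨hZ.disjoint, hZY.mono hFZ hQY⟩, hZY.symm.mono hGY hPZ, hY.disjoint⟩
  · rw [biUnion_union, union_union_union_comm, ← hZ.eq_union, ← hY.eq_union]

end IsFreeSandwichDecomposition

lemma exists_isFreeSandwichDecomposition_image {a w b : S}
    (hf : Injective fun n : ℕ => a * w ^ n * b) {s : Set ℕ} (hs : EventuallyPeriodic s) :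
    ∃ F P, IsFreeSandwichDecomposition ((fun n : ℕ => a * w ^ n * b) '' s) F P := by
  obtain ⟨M, d, hd, hs_eq⟩ := hs.exists_eq_union_progressions
  set f := fun n : ℕ => a * w ^ n * b
  set R := {r | r < d ∧ M + r ∈ s}
  set g := fun r => (a * w ^ (M + r), w ^ d, b)
  have hprog : ∀ r, Injective fun k => M + r + d * k := fun r k l hkl =>
    Nat.eq_of_mul_eq_mul_left hd (by simpa using hkl)
  have hU : ⋃ t ∈ g '' R, sandwich t.1 t.2.1 t.2.2 =
      f '' ⋃ r ∈ R, range fun k => M + r + d * k := by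
    simp only [biUnion_image, image_iUnion₂, g, sandwich_mul_pow_pow, f]
  refine ⟨f '' (s ∩ Iio M), g '' R, ⟨?_, ?_, ?_, ?_, ?_, ?_⟩⟩
  · exact ((finite_Iio M).subset inter_subset_right).image f
  · exact ((finite_lt_nat d).subset fun r hr => hr.1).image g
  · rintro _ ⟨r, -, rfl⟩
    simp only [g, mul_pow_mul_pow_pow_mul]
    exact hf.comp (hprog r)
  · rintro _ ⟨r, hr, rfl⟩ _ ⟨r', hr', rfl⟩ hne
    change Disjoint (sandwich _ _ _) (sandwich _ _ _)
    rw [sandwich_mul_pow_pow, sandwich_mul_pow_pow, disjoint_image_iff hf, disjoint_left]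
    rintro _ ⟨k, rfl⟩ ⟨k', hk'⟩
    simp only at hk'
    have hmod := congrArg (· % d) (show r' + d * k' = r + d * k by omega)
    simp only [Nat.add_mul_mod_self_left, Nat.mod_eq_of_lt hr.1, Nat.mod_eq_of_lt hr'.1] at hmod
    exact hne (by rw [hmod])
  · rw [hU, disjoint_image_iff hf, disjoint_left]
    rintro n ⟨-, hn⟩ hn'
    simp only [mem_iUnion, mem_range] at hn'
    obtain ⟨r, -, k, rfl⟩ := hn'
    exact (not_lt.2 (Nat.le_add_right_of_le (Nat.le_add_right M r))) hn
  · rw [hU, ← image_union, ← hs_eq]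

end Monoid

namespace FreeMonoid

variable {α : Type*}

lemma length_pow (w : FreeMonoid α) (n : ℕ) : (w ^ n).length = n * w.length := by
  induction n with
  | zero => simp
  | succ n ih => rw [pow_succ, length_mul, ih, Nat.succ_mul]

lemma injective_mul_pow_mul {w : FreeMonoid α} (hw : w ≠ 1) (a b : FreeMonoid α) :
    Injective fun n : ℕ => a * w ^ n * b := fun m n h => by
  have hlen := congrArg length h
  simp only [length_mul, length_pow] at hlen
  exact Nat.eq_of_mul_eq_mul_right (Nat.pos_of_ne_zero (mt length_eq_zero.1 hw)) (by omega)

lemma mul_eq_mul_iff {u v s t : FreeMonoid α} :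
    u * v = s * t ↔ (∃ c, s = u * c ∧ v = c * t) ∨ ∃ c, u = s * c ∧ t = c * v := by
  simp only [← toList.injective.eq_iff, toList_mul, List.append_eq_append_iff,
    toList.surjective.exists]

lemma mul_pow_mul_eq_mul_pow_mul {A B x y b b' : FreeMonoid α} (h0 : A * b = B * b')
    (h1 : A * x * b = B * y * b') (k : ℕ) : A * x ^ k * b = B * y ^ k * b' := by
  wlog hc : ∃ c, B = A * c ∧ b = c * b' generalizing A B x y b b'
  · obtain hc | hc := mul_eq_mul_iff.1 h0
    · exact this h0 h1 hc
    · exact (this h0.symm h1.symm hc).symm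
  obtain ⟨c, rfl, rfl⟩ := hc
  have hcomm : SemiconjBy c y x := by
    have : A * (c * y) * b' = A * (x * c) * b' := by simpa only [mul_assoc] using h1.symm
    exact mul_left_cancel (mul_right_cancel this)
  calc A * x ^ k * (c * b') = A * (x ^ k * c) * b' := by simp only [mul_assoc]
    _ = A * c * y ^ k * b' := by rw [← (hcomm.pow_right k).eq]; simp only [mul_assoc]

lemma mul_pow_add_mul_mul_mem_sandwich {a w b a' w' b' : FreeMonoid α} (hw' : w' ≠ 1) {m d : ℕ}
    (hm : a * w ^ m * b ∈ sandwich a' w' b') (hmd : a * w ^ (m + d) * b ∈ sandwich a' w' b')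
    (k : ℕ) : a * w ^ (m + k * d) * b ∈ sandwich a' w' b' := by
  obtain ⟨m', hm'⟩ := hm
  obtain ⟨n', hn'⟩ := hmd
  have hle : m' ≤ n' := by
    have hlen_m := congrArg length hm'
    have hlen_n := congrArg length hn'
    simp only [length_mul, length_pow] at hlen_m hlen_n
    have := Nat.mul_le_mul_right w.length (Nat.le_add_right m d)
    exact Nat.le_of_mul_le_mul_right (by omega) (Nat.pos_of_ne_zero (mt length_eq_zero.1 hw'))
  obtain ⟨e, rfl⟩ := Nat.exists_eq_add_of_le hle
  have h1 : a' * w' ^ m' * w' ^ e * b' = a * w ^ m * w ^ d * b := by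
    rw [mul_assoc a', ← pow_add, mul_assoc a, ← pow_add]
    exact hn'
  have := mul_pow_mul_eq_mul_pow_mul hm' h1 k
  rw [mul_pow_mul_pow_pow_mul, mul_pow_mul_pow_pow_mul] at this
  exact ⟨m' + k * e, by rw [mul_comm k, mul_comm k, ← this]⟩

lemma eventuallyPeriodic_preimage_sandwich {w' : FreeMonoid α} (hw' : w' ≠ 1)
    (a w b a' b' : FreeMonoid α) :
    EventuallyPeriodic ((fun n : ℕ => a * w ^ n * b) ⁻¹' sandwich a' w' b') :=
  .of_add_mul_mem fun _ _ hm hmd k => mul_pow_add_mul_mul_mem_sandwich hw' hm hmd k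

lemma exists_isFreeSandwichDecomposition_union_sandwich {Z F : Set (FreeMonoid α)}
    {P : Set (FreeMonoid α × FreeMonoid α × FreeMonoid α)}
    (hZ : IsFreeSandwichDecomposition Z F P) (a w b : FreeMonoid α) :
    ∃ F' P', IsFreeSandwichDecomposition (Z ∪ sandwich a w b) F' P' := by
  suffices ∃ G Q, IsFreeSandwichDecomposition (sandwich a w b \ Z) G Q by
    obtain ⟨G, Q, hY⟩ := this
    exact ⟨_, _, union_sdiff_self (s := Z) ▸ hZ.union hY disjoint_sdiff_right⟩
  rcases eq_or_ne w 1 with rfl | hw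
  · exact ⟨_, _, .of_finite (sandwich_one a b ▸ finite_singleton (a * b)).sdiff⟩
  have hf := injective_mul_pow_mul hw a b
  rw [sandwich, ← image_compl_preimage]
  refine exists_isFreeSandwichDecomposition_image hf (EventuallyPeriodic.compl ?_)
  rw [hZ.eq_union, preimage_union, preimage_iUnion₂]
  refine (EventuallyPeriodic.of_finite (hZ.finite_part.preimage hf.injOn)).union ?_
  exact .biUnion hZ.finite_triples fun t ht =>
    eventuallyPeriodic_preimage_sandwich (ne_one_of_injective_sandwich (hZ.injective t ht)) ..

lemma exists_isFreeSandwichDecomposition_biUnion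
    {I : Set (FreeMonoid α × FreeMonoid α × FreeMonoid α)} (hI : I.Finite) :
    ∃ F P, IsFreeSandwichDecomposition (⋃ t ∈ I, sandwich t.1 t.2.1 t.2.2) F P := by
  induction I, hI using Set.Finite.induction_on with
  | empty => exact ⟨∅, ∅, by simpa using IsFreeSandwichDecomposition.of_finite finite_empty⟩
  | @insert t I _ _ ih =>
    obtain ⟨F, P, hd⟩ := ih
    rw [biUnion_insert, union_comm]
    exact exists_isFreeSandwichDecomposition_union_sandwich hd _ _ _

end FreeMonoid

theorem finite_union_sandwiches_to_free_sandwich_decomposition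
    {α : Type*} (Z : Set (FreeMonoid α))
    (h : ∃ (s : ℕ) (a w b : Fin s → FreeMonoid α),
      Z = ⋃ i, sandwich (a i) (w i) (b i)) :
    ∃ (F : Set (FreeMonoid α)) (N : ℕ) (a w b : Fin N → FreeMonoid α),
      F.Finite ∧ F ⊆ Z ∧
      (∀ i, w i ≠ 1) ∧
      (∀ i, Function.Injective fun n : ℕ => a i * (w i) ^ n * b i) ∧
      (∀ i j, i ≠ j →
        Disjoint (sandwich (a i) (w i) (b i)) (sandwich (a j) (w j) (b j))) ∧
      (∀ i, Disjoint F (sandwich (a i) (w i) (b i))) ∧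
      Z = F ∪ ⋃ i, sandwich (a i) (w i) (b i) := by
  obtain ⟨s, a, w, b, rfl⟩ := h
  obtain ⟨F, P, hd⟩ :=
    FreeMonoid.exists_isFreeSandwichDecomposition_biUnion (finite_range fun i => (a i, w i, b i))
  rw [biUnion_range] at hd
  have := hd.finite_triples.to_subtype
  obtain ⟨N, ⟨e⟩⟩ := Finite.exists_equiv_fin P
  set t := fun i => (e.symm i : FreeMonoid α × FreeMonoid α × FreeMonoid α)
  have ht : ∀ i, t i ∈ P := fun i => (e.symm i).2
  have hU : ⋃ i, sandwich (t i).1 (t i).2.1 (t i).2.2 = ⋃ t ∈ P, sandwich t.1 t.2.1 t.2.2 := by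
    rw [biUnion_eq_iUnion]
    exact e.symm.surjective.iUnion_comp fun t : P => sandwich t.1.1 t.1.2.1 t.1.2.2
  refine ⟨F, N, fun i => (t i).1, fun i => (t i).2.1, fun i => (t i).2.2, hd.finite_part,
    hd.eq_union ▸ subset_union_left, fun i => ne_one_of_injective_sandwich (hd.injective _ (ht i)),
    fun i => hd.injective _ (ht i), fun i j hij => ?_, fun i => ?_, hU ▸ hd.eq_union⟩
  · exact hd.pairwiseDisjoint (ht i) (ht j) fun h => hij (e.symm.injective (Subtype.ext h))
  · exact hd.disjoint.mono_right
      (subset_biUnion_of_mem (u := fun t => sandwich t.1 t.2.1 t.2.2) (ht i))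
end

section
/- Let M be the quotient of the monoid with zero WithZero (FreeMonoid (Fin 2)) by the congruence generated by the two pairs (x*y, 0) and (x*x, 0), where x and y denote the images of the two generators, and let π be the quotient map. Then the elements π(y^n * x), n ∈ ℕ, are pairwise distinct, nonzero, and each is nilpotent: (π(y^n * x))^2 = 0 in M. In particular M contains an infinite set of nilpotent elements. -/
open Polynomial Matrix

noncomputable def phiM : FreeMonoid (Fin 2) →* Matrix (Fin 2) (Fin 2) (Polynomial ℤ) :=
  FreeMonoid.lift (fun i => if i = 0 then Matrix.single 0 1 1 else Matrix.single 0 0 X)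

noncomputable def psiM : WithZero (FreeMonoid (Fin 2)) →*₀ Matrix (Fin 2) (Fin 2) (Polynomial ℤ) :=
  WithZero.lift' phiM

lemma phiM_x : phiM (FreeMonoid.of (0 : Fin 2)) = Matrix.single 0 1 1 := by
  simp [phiM]

lemma phiM_y : phiM (FreeMonoid.of (1 : Fin 2)) = Matrix.single 0 0 X := by
  simp [phiM]

lemma phiM_word (n : ℕ) :
    phiM ((FreeMonoid.of (1 : Fin 2)) ^ n * FreeMonoid.of (0 : Fin 2))
      = Matrix.single 0 1 (X ^ n) := by
  induction n with
  | zero => simp [phiM_x]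
  | succ k ih =>
      rw [pow_succ', mul_assoc, _root_.map_mul, phiM_y, ih, Matrix.single_mul_single_same, pow_succ']

theorem monoid_M_has_infinitely_many_nilpotents
    (c : Con (WithZero (FreeMonoid (Fin 2))))
    (hc : c = conGen fun p q =>
      (p = (↑(FreeMonoid.of (0 : Fin 2) * FreeMonoid.of (1 : Fin 2)) :
          WithZero (FreeMonoid (Fin 2))) ∧ q = 0) ∨
      (p = (↑(FreeMonoid.of (0 : Fin 2) * FreeMonoid.of (0 : Fin 2)) :
          WithZero (FreeMonoid (Fin 2))) ∧ q = 0)) :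
    (Function.Injective fun n : ℕ =>
      c.mk' (↑((FreeMonoid.of (1 : Fin 2)) ^ n * FreeMonoid.of (0 : Fin 2)))) ∧
    (∀ n : ℕ,
      c.mk' (↑((FreeMonoid.of (1 : Fin 2)) ^ n * FreeMonoid.of (0 : Fin 2))) ≠ c.mk' 0) ∧
    (∀ n : ℕ,
      (c.mk' (↑((FreeMonoid.of (1 : Fin 2)) ^ n * FreeMonoid.of (0 : Fin 2)))) ^ 2
        = c.mk' 0) ∧
    {s : c.Quotient | ∃ k : ℕ, 1 ≤ k ∧ s ^ k = c.mk' 0}.Infinite := by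
  have habzero : phiM (FreeMonoid.of (0 : Fin 2)) * phiM (FreeMonoid.of (1 : Fin 2)) = 0 := by
    rw [phiM_x, phiM_y, Matrix.single_mul_single_of_ne (h := one_ne_zero)]
  have haazero : phiM (FreeMonoid.of (0 : Fin 2)) * phiM (FreeMonoid.of (0 : Fin 2)) = 0 := by
    rw [phiM_x, Matrix.single_mul_single_of_ne (h := one_ne_zero)]
  have e1 : psiM (↑(FreeMonoid.of (0 : Fin 2) * FreeMonoid.of (1 : Fin 2)) :
      WithZero (FreeMonoid (Fin 2))) = psiM 0 := by
    rw [map_zero, psiM, WithZero.lift'_coe, _root_.map_mul]; exact habzero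
  have e2 : psiM (↑(FreeMonoid.of (0 : Fin 2) * FreeMonoid.of (0 : Fin 2)) :
      WithZero (FreeMonoid (Fin 2))) = psiM 0 := by
    rw [map_zero, psiM, WithZero.lift'_coe, _root_.map_mul]; exact haazero
  have hker : c ≤ Con.ker psiM.toMonoidHom := by
    rw [hc]
    apply Con.conGen_le.mpr
    rintro p q (⟨rfl, rfl⟩ | ⟨rfl, rfl⟩)
    · exact (Con.ker_rel _).mpr e1
    · exact (Con.ker_rel _).mpr e2
  have hpsi : ∀ n : ℕ,
      psiM (↑((FreeMonoid.of (1 : Fin 2)) ^ n * FreeMonoid.of (0 : Fin 2)))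
        = Matrix.single 0 1 (X ^ n) := fun n => by
    rw [psiM, WithZero.lift'_coe, phiM_word]
  -- key congruence facts in the quotient
  have hxy : c.mk' (↑(FreeMonoid.of (0 : Fin 2) * FreeMonoid.of (1 : Fin 2)) :
      WithZero (FreeMonoid (Fin 2))) = c.mk' 0 :=
    c.eq.mpr (hc ▸ ConGen.Rel.of _ _ (Or.inl ⟨rfl, rfl⟩))
  have hxx : c.mk' (↑(FreeMonoid.of (0 : Fin 2) * FreeMonoid.of (0 : Fin 2)) :
      WithZero (FreeMonoid (Fin 2))) = c.mk' 0 :=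
    c.eq.mpr (hc ▸ ConGen.Rel.of _ _ (Or.inr ⟨rfl, rfl⟩))
  have hz_left : ∀ q : c.Quotient, c.mk' 0 * q = c.mk' 0 := by
    intro q
    obtain ⟨w, rfl⟩ := c.mk'_surjective q
    rw [← _root_.map_mul, zero_mul]
  have hz_right : ∀ q : c.Quotient, q * c.mk' 0 = c.mk' 0 := by
    intro q
    obtain ⟨w, rfl⟩ := c.mk'_surjective q
    rw [← _root_.map_mul, mul_zero]
  have hinj : Function.Injective fun n : ℕ =>
      c.mk' (↑((FreeMonoid.of (1 : Fin 2)) ^ n * FreeMonoid.of (0 : Fin 2)) :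
        WithZero (FreeMonoid (Fin 2))) := by
    intro m n h
    have h2 : psiM (↑((FreeMonoid.of (1 : Fin 2)) ^ m * FreeMonoid.of (0 : Fin 2)))
        = psiM (↑((FreeMonoid.of (1 : Fin 2)) ^ n * FreeMonoid.of (0 : Fin 2))) :=
      hker (c.eq.mp h)
    rw [hpsi, hpsi] at h2
    have h3 := congrFun (congrFun h2 0) 1
    simp only [Matrix.single_apply_same] at h3
    have := congrArg natDegree h3
    simpa [natDegree_X_pow] using this
  have hne : ∀ n : ℕ,
      c.mk' (↑((FreeMonoid.of (1 : Fin 2)) ^ n * FreeMonoid.of (0 : Fin 2)) :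
        WithZero (FreeMonoid (Fin 2))) ≠ c.mk' 0 := by
    intro n h
    have h2 : psiM (↑((FreeMonoid.of (1 : Fin 2)) ^ n * FreeMonoid.of (0 : Fin 2)))
        = psiM 0 := hker (c.eq.mp h)
    rw [hpsi, map_zero] at h2
    have h3 := congrFun (congrFun h2 0) 1
    simp only [Matrix.single_apply_same, Matrix.zero_apply] at h3
    exact pow_ne_zero n Polynomial.X_ne_zero h3
  have hsq : ∀ n : ℕ,
      (c.mk' (↑((FreeMonoid.of (1 : Fin 2)) ^ n * FreeMonoid.of (0 : Fin 2)) :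
        WithZero (FreeMonoid (Fin 2)))) ^ 2 = c.mk' 0 := by
    intro n
    rw [sq, ← _root_.map_mul, ← WithZero.coe_mul]
    cases n with
    | zero =>
        simpa using hxx
    | succ k =>
        have hword : (FreeMonoid.of (1 : Fin 2)) ^ (k + 1) * FreeMonoid.of (0 : Fin 2) *
            ((FreeMonoid.of (1 : Fin 2)) ^ (k + 1) * FreeMonoid.of (0 : Fin 2)) =
            (FreeMonoid.of (1 : Fin 2)) ^ (k + 1) *
              ((FreeMonoid.of (0 : Fin 2) * FreeMonoid.of (1 : Fin 2)) *
                ((FreeMonoid.of (1 : Fin 2)) ^ k * FreeMonoid.of (0 : Fin 2))) := by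
          rw [pow_succ']
          simp only [mul_assoc]
        rw [hword, WithZero.coe_mul, WithZero.coe_mul, _root_.map_mul, _root_.map_mul,
          hxy, hz_left, hz_right]
  refine ⟨hinj, hne, hsq, ?_⟩
  apply Set.infinite_of_injective_forall_mem (f := fun n : ℕ =>
    c.mk' (↑((FreeMonoid.of (1 : Fin 2)) ^ n * FreeMonoid.of (0 : Fin 2)) :
      WithZero (FreeMonoid (Fin 2)))) hinj
  intro n
  exact ⟨2, one_le_two, hsq n⟩
end

section
/- Let M be the quotient of the monoid with zero WithZero (FreeMonoid (Fin 2)) by the congruence generated by the two pairs (x*y, 0) and (x*x, 0), where x and y denote the images of the two generators, and let π be the quotient map. Then M is the disjoint union of the finite set {0, 1}, the free sandwich 1⟨π(y)⟩π(x) = {π(y)^n · π(x) : n ≥ 1} ∪ {π(x)}, and the set {π(y)^n : n ≥ 1}; equivalently, every element of M equals exactly one of: 0, π(y)^n for some n ≥ 0, or π(y)^n · π(x) for some n ≥ 0, and all these listed elements are pairwise distinct. -/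
namespace MAux
set_option linter.unreachableTactic false
set_option linter.unusedTactic false

abbrev W := WithZero (FreeMonoid (Fin 2))

def nf : List (Fin 2) → Option (ℕ × Bool)
  | [] => some (0, false)
  | a :: l =>
    if a = 1 then (fun p : ℕ × Bool => (p.1 + 1, p.2)) <$> nf l
    else if nf l = some (0, false) then some (0, true) else none

def g : Option (ℕ × Bool) → Option (ℕ × Bool) → Option (ℕ × Bool)
  | none, _ => none
  | _, none => none
  | some (n, false), some (m, b) => some (n + m, b)
  | some (n, true), some p => if p = (0, false) then some (n, true) else none

theorem g_none (x : Option (ℕ × Bool)) : g none x = none := by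
  rcases x with _ | ⟨m, _ | _⟩ <;> rfl

theorem g_none' (x : Option (ℕ × Bool)) : g x none = none := by
  rcases x with _ | ⟨m, _ | _⟩ <;> rfl

theorem nf_cons_one (l : List (Fin 2)) :
    nf (1 :: l) = (fun p : ℕ × Bool => (p.1 + 1, p.2)) <$> nf l := by simp [nf]

theorem nf_cons_ne {a : Fin 2} (ha : a ≠ 1) (l : List (Fin 2)) :
    nf (a :: l) = if nf l = some (0, false) then some (0, true) else none := by
  simp [nf, ha]

theorem nf_append : ∀ l₁ l₂ : List (Fin 2), nf (l₁ ++ l₂) = g (nf l₁) (nf l₂) := by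
  intro l₁ l₂
  induction l₁ with
  | nil => rcases h : nf l₂ with _ | ⟨m, b⟩ <;> simp [nf, g, h]
  | cons a l ih =>
    by_cases ha : a = 1
    · subst ha
      rw [List.cons_append, nf_cons_one, nf_cons_one, ih]
      rcases h1 : nf l with _ | ⟨n, _ | _⟩ <;> rcases h2 : nf l₂ with _ | ⟨m, _ | _⟩ <;>
        simp [g] <;> (try omega) <;> (try (split_ifs <;> simp_all)) <;> (try omega)
    · rw [List.cons_append, nf_cons_ne ha, nf_cons_ne ha, ih]
      rcases h1 : nf l with _ | ⟨n, _ | _⟩ <;> rcases h2 : nf l₂ with _ | ⟨m, _ | _⟩ <;>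
        simp [g] <;> (try omega) <;> (try (split_ifs <;> simp_all)) <;> (try omega)

def f : W → Option (ℕ × Bool)
  | 0 => none
  | (l : FreeMonoid (Fin 2)) => nf l.toList

theorem f_coe (l : FreeMonoid (Fin 2)) : f ↑l = nf l.toList := rfl

theorem f_mul (a b : W) : f (a * b) = g (f a) (f b) := by
  refine WithZero.cases_on a ?_ ?_
  · rw [zero_mul]; exact (g_none _).symm
  · intro u
    refine WithZero.cases_on b ?_ ?_
    · rw [mul_zero]; exact (g_none' _).symm
    · intro v
      rw [← WithZero.coe_mul, f_coe, f_coe, f_coe, FreeMonoid.toList_mul, nf_append]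

/-- The congruence "same normal form". -/
def d : Con W where
  r a b := f a = f b
  iseqv := ⟨fun _ => rfl, Eq.symm, Eq.trans⟩
  mul' {w x y z} h1 h2 := by
    show f (w * y) = f (x * z)
    rw [f_mul, f_mul, show f w = f x from h1, show f y = f z from h2]

theorem f_y_pow (n : ℕ) : f ↑(FreeMonoid.of (1 : Fin 2) ^ n) = some (n, false) := by
  induction n with
  | zero => rfl
  | succ k ih =>
    rw [pow_succ, WithZero.coe_mul, f_mul, ih]
    rfl

theorem f_y_pow_x (n : ℕ) :
    f ↑(FreeMonoid.of (1 : Fin 2) ^ n * FreeMonoid.of (0 : Fin 2)) = some (n, true) := by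
  rw [WithZero.coe_mul, f_mul, f_y_pow]
  rfl

end MAux


theorem monoid_M_sandwich_decomposition
    (c : Con (WithZero (FreeMonoid (Fin 2))))
    (hc : c = conGen fun p q =>
      (p = (↑(FreeMonoid.of (0 : Fin 2) * FreeMonoid.of (1 : Fin 2)) :
          WithZero (FreeMonoid (Fin 2))) ∧ q = 0) ∨
      (p = (↑(FreeMonoid.of (0 : Fin 2) * FreeMonoid.of (0 : Fin 2)) :
          WithZero (FreeMonoid (Fin 2))) ∧ q = 0)) :
    -- every element is 0, a power of y, or a power of y times x
    (∀ s : c.Quotient, s = c.mk' 0 ∨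
      (∃ n : ℕ, s = c.mk' (↑((FreeMonoid.of (1 : Fin 2)) ^ n))) ∨
      (∃ n : ℕ, s = c.mk' (↑((FreeMonoid.of (1 : Fin 2)) ^ n * FreeMonoid.of (0 : Fin 2))))) ∧
    -- and all the listed elements are pairwise distinct:
    (Function.Injective fun n : ℕ => c.mk'
      (↑((FreeMonoid.of (1 : Fin 2)) ^ n) : WithZero (FreeMonoid (Fin 2)))) ∧
    (Function.Injective fun n : ℕ =>
      c.mk' (↑((FreeMonoid.of (1 : Fin 2)) ^ n * FreeMonoid.of (0 : Fin 2)))) ∧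
    (∀ n : ℕ, c.mk'
      (↑((FreeMonoid.of (1 : Fin 2)) ^ n) : WithZero (FreeMonoid (Fin 2))) ≠ c.mk' 0) ∧
    (∀ n : ℕ,
      c.mk' (↑((FreeMonoid.of (1 : Fin 2)) ^ n * FreeMonoid.of (0 : Fin 2))) ≠ c.mk' 0) ∧
    (∀ n m : ℕ, c.mk'
      (↑((FreeMonoid.of (1 : Fin 2)) ^ n) : WithZero (FreeMonoid (Fin 2))) ≠
      c.mk' (↑((FreeMonoid.of (1 : Fin 2)) ^ m * FreeMonoid.of (0 : Fin 2)))) := by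
  have hle : c ≤ MAux.d := by
    rw [hc]
    apply Con.conGen_le.mpr
    rintro p q (⟨rfl, rfl⟩ | ⟨rfl, rfl⟩) <;> exact rfl
  have hf : ∀ a b : WithZero (FreeMonoid (Fin 2)),
      c.mk' a = c.mk' b → MAux.f a = MAux.f b := by
    intro a b h
    exact hle (c.eq.mp h)
  have hfz : MAux.f 0 = none := rfl
  refine ⟨?_, ?_, ?_, ?_, ?_, ?_⟩
  · -- coverage
    have hmk : ∀ a : WithZero (FreeMonoid (Fin 2)), (↑a : c.Quotient) = c.mk' a := fun _ => rfl
    have relXY : c.mk' (↑(FreeMonoid.of (0 : Fin 2)) : WithZero (FreeMonoid (Fin 2))) *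
        c.mk' ↑(FreeMonoid.of (1 : Fin 2)) = c.mk' 0 := by
      rw [← map_mul, ← WithZero.coe_mul]
      exact c.eq.mpr (hc ▸ ConGen.Rel.of _ _ (Or.inl ⟨rfl, rfl⟩))
    have relXX : c.mk' (↑(FreeMonoid.of (0 : Fin 2)) : WithZero (FreeMonoid (Fin 2))) *
        c.mk' ↑(FreeMonoid.of (0 : Fin 2)) = c.mk' 0 := by
      rw [← map_mul, ← WithZero.coe_mul]
      exact c.eq.mpr (hc ▸ ConGen.Rel.of _ _ (Or.inr ⟨rfl, rfl⟩))
    have relZ : ∀ s : c.Quotient, c.mk' 0 * s = c.mk' 0 := by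
      intro s
      induction s using Con.induction_on with
      | _ w => rw [hmk, ← map_mul, zero_mul]
    have relZ' : ∀ s : c.Quotient, s * c.mk' 0 = c.mk' 0 := by
      intro s
      induction s using Con.induction_on with
      | _ w => rw [hmk, ← map_mul, mul_zero]
    have hpow : ∀ n : ℕ, c.mk' (↑(FreeMonoid.of (1 : Fin 2) ^ n) :
        WithZero (FreeMonoid (Fin 2))) = (c.mk' ↑(FreeMonoid.of (1 : Fin 2))) ^ n := by
      intro n; rw [WithZero.coe_pow, map_pow]
    have hpx : ∀ n : ℕ, c.mk' (↑(FreeMonoid.of (1 : Fin 2) ^ n * FreeMonoid.of (0 : Fin 2)) :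
        WithZero (FreeMonoid (Fin 2))) =
        (c.mk' ↑(FreeMonoid.of (1 : Fin 2))) ^ n * c.mk' ↑(FreeMonoid.of (0 : Fin 2)) := by
      intro n; rw [WithZero.coe_mul, map_mul, hpow]
    intro s
    induction s using Con.induction_on with
    | _ w =>
    refine WithZero.cases_on w ?_ ?_
    · exact Or.inl rfl
    · intro u
      induction u using FreeMonoid.recOn with
      | one => exact Or.inr (Or.inl ⟨0, by rw [pow_zero]; rfl⟩)
      | of_mul x l ih =>
        rw [WithZero.coe_mul, hmk, map_mul]
        simp only [hmk] at ih
        have hx : x = 0 ∨ x = 1 := by fin_cases x; exacts [Or.inl rfl, Or.inr rfl]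
        rcases ih with h | ⟨n, h⟩ | ⟨n, h⟩ <;> rw [h]
        · exact Or.inl (relZ' _)
        · rcases hx with rfl | rfl
          · rcases n with _ | m
            · refine Or.inr (Or.inr ⟨0, ?_⟩)
              rw [hpx]
              simp [WithZero.coe_one]
            · refine Or.inl ?_
              rw [hpow, pow_succ', ← mul_assoc, relXY, relZ]
          · refine Or.inr (Or.inl ⟨n + 1, ?_⟩)
            rw [hpow, hpow, pow_succ']
        · rcases hx with rfl | rfl
          · rcases n with _ | m
            · refine Or.inl ?_
              rw [hpx, pow_zero, one_mul, relXX]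
            · refine Or.inl ?_
              rw [hpx, pow_succ', mul_assoc, ← mul_assoc, relXY, relZ]
          · refine Or.inr (Or.inr ⟨n + 1, ?_⟩)
            rw [hpx, hpx, pow_succ', mul_assoc]
  · intro n m h
    have := hf _ _ h
    rw [MAux.f_y_pow, MAux.f_y_pow] at this
    simpa using this
  · intro n m h
    have := hf _ _ h
    rw [MAux.f_y_pow_x, MAux.f_y_pow_x] at this
    simpa using this
  · intro n h
    have := hf _ _ h
    rw [MAux.f_y_pow, hfz] at this
    simp at this
  · intro n h
    have := hf _ _ h
    rw [MAux.f_y_pow_x, hfz] at this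
    simp at this
  · intro n m h
    have := hf _ _ h
    rw [MAux.f_y_pow, MAux.f_y_pow_x] at this
    simp at this
end

section
/- Let M be the quotient of the monoid with zero WithZero (FreeMonoid (Fin 2)) by the congruence generated by the two pairs (x*y, 0) and (x*x, 0), where x and y denote the images of the two generators. Then M cannot be represented as a finite union of monogenic subsemigroups: there is no finite list of elements m_1, …, m_k ∈ M with M = ⋃_{i=1}^k {m_i^n : n ∈ ℕ}. -/
/-!
Every element of `M` is `0`, `y ^ a` or `y ^ a * x`. The elements `y ^ k * x` are pairwise
distinct and none of them is a proper power: `(y ^ a * x) ^ 2 = 0`, and powers of `y ^ a` contain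
no `x`. Hence a monogenic subsemigroup contains at most one `y ^ k * x`, and finitely many of them
cannot cover these infinitely many elements. Both facts are read off in a normal-form model of `M`,
onto which the quotient maps.
-/

theorem Monoid.not_exists_finite_monogenic_cover {S : Type*} [Monoid S] {P : Set S}
    (hP : P.Infinite) (hP_pow : ∀ u : S, (P ∩ Set.range (u ^ · : ℕ → S)).Subsingleton) :
    ¬ ∃ (k : ℕ) (m : Fin k → S),
      (Set.univ : Set S) = ⋃ i, Set.range fun n : ℕ => (m i) ^ n := by
  rintro ⟨k, m, hm⟩
  have hP_eq : P = ⋃ i, P ∩ Set.range (m i ^ · : ℕ → S) := by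
    rw [← Set.inter_iUnion, ← hm, Set.inter_univ]
  exact hP (hP_eq ▸ Set.finite_iUnion fun i => (hP_pow (m i)).finite)

/-- Normal forms of `M`: `zero`, and `yx a b` standing for `y ^ a * x ^ (if b then 1 else 0)`. -/
inductive MNormalForm
  | zero
  | yx (a : ℕ) (b : Bool)

namespace MNormalForm

def mul : MNormalForm → MNormalForm → MNormalForm
  | yx a false, yx c d => yx (a + c) d
  | yx a true, yx 0 false => yx a true
  | _, _ => zero

instance : MonoidWithZero MNormalForm where
  mul := mul
  one := yx 0 false
  zero := zero
  mul_assoc u v w := by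
    rcases u with _ | ⟨a, _ | _⟩ <;> rcases v with _ | ⟨_ | c, _ | _⟩ <;>
      rcases w with _ | ⟨_ | e, _ | _⟩ <;> simp [HMul.hMul, Mul.mul, mul, Nat.add_assoc]
  one_mul u := by rcases u with _ | ⟨a, b⟩ <;> simp [HMul.hMul, Mul.mul, mul]
  mul_one u := by rcases u with _ | ⟨a, _ | _⟩ <;> rfl
  zero_mul _ := rfl
  mul_zero u := by rcases u with _ | ⟨a, _ | _⟩ <;> rfl

@[simp] lemma yx_false_mul (a c : ℕ) (d : Bool) : yx a false * yx c d = yx (a + c) d := rfl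

lemma yx_true_mul_yx_true (a c : ℕ) : yx a true * yx c true = 0 := by cases c <;> rfl

lemma yx_false_pow (a n : ℕ) : yx a false ^ n = yx (a * n) false := by
  induction n with
  | zero => rfl
  | succ n ih => rw [pow_succ, ih, yx_false_mul, Nat.mul_succ]

lemma yx_true_pow (a : ℕ) {n : ℕ} (hn : 2 ≤ n) : yx a true ^ n = 0 := by
  obtain ⟨n, rfl⟩ := Nat.exists_eq_add_of_le' hn
  rw [pow_succ, pow_succ, mul_assoc, yx_true_mul_yx_true, mul_zero]

lemma eq_yx_true_of_pow_eq {u : MNormalForm} {n k : ℕ} (h : u ^ n = yx k true) :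
    u = yx k true := by
  rcases u with _ | ⟨a, _ | _⟩
  · rcases n with _ | n
    · cases h
    · rw [pow_succ'] at h
      cases h
  · rw [yx_false_pow] at h
    cases h
  · rcases n with _ | _ | n
    · cases h
    · rwa [pow_one] at h
    · rw [yx_true_pow a (by omega)] at h
      cases h

end MNormalForm

open MNormalForm

def MRel (p q : WithZero (FreeMonoid (Fin 2))) : Prop :=
  (p = (↑(FreeMonoid.of (0 : Fin 2) * FreeMonoid.of (1 : Fin 2)) :
      WithZero (FreeMonoid (Fin 2))) ∧ q = 0) ∨
  (p = (↑(FreeMonoid.of (0 : Fin 2) * FreeMonoid.of (0 : Fin 2)) :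
      WithZero (FreeMonoid (Fin 2))) ∧ q = 0)

def freeToNormalForm : WithZero (FreeMonoid (Fin 2)) →*₀ MNormalForm :=
  WithZero.lift' (FreeMonoid.lift ![yx 0 true, yx 1 false])

def toNormalForm : (conGen MRel).Quotient →* MNormalForm :=
  (conGen MRel).lift freeToNormalForm <| Con.conGen_le.2 <| by
    rintro p q (⟨rfl, rfl⟩ | ⟨rfl, rfl⟩) <;> rfl

def yPowX (k : ℕ) : (conGen MRel).Quotient :=
  ((↑(FreeMonoid.of (1 : Fin 2) ^ k * FreeMonoid.of (0 : Fin 2)) :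
    WithZero (FreeMonoid (Fin 2))) :)

lemma toNormalForm_yPowX (k : ℕ) : toNormalForm (yPowX k) = yx k true := by
  simp [toNormalForm, yPowX, freeToNormalForm, yx_false_pow]

lemma yPowX_injective : Function.Injective yPowX := fun j k h => by
  simpa [toNormalForm_yPowX] using congrArg toNormalForm h

lemma range_yPowX_inter_range_pow_subsingleton (u : (conGen MRel).Quotient) :
    (Set.range yPowX ∩ Set.range (u ^ · : ℕ → _)).Subsingleton := by
  have h_image {k n : ℕ} (h : u ^ n = yPowX k) : toNormalForm u = yx k true :=
    eq_yx_true_of_pow_eq (by rw [← map_pow, h, toNormalForm_yPowX])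
  rintro _ ⟨⟨j, rfl⟩, n, hn⟩ _ ⟨⟨k, rfl⟩, m, hm⟩
  have hjk := (h_image hn).symm.trans (h_image hm)
  cases hjk
  rfl

theorem monoid_M_not_finite_union_of_monogenic
    (c : Con (WithZero (FreeMonoid (Fin 2))))
    (hc : c = conGen fun p q =>
      (p = (↑(FreeMonoid.of (0 : Fin 2) * FreeMonoid.of (1 : Fin 2)) :
          WithZero (FreeMonoid (Fin 2))) ∧ q = 0) ∨
      (p = (↑(FreeMonoid.of (0 : Fin 2) * FreeMonoid.of (0 : Fin 2)) :
          WithZero (FreeMonoid (Fin 2))) ∧ q = 0)) :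
    ¬ ∃ (k : ℕ) (m : Fin k → c.Quotient),
      (Set.univ : Set c.Quotient) = ⋃ i, Set.range fun n : ℕ => (m i) ^ n := by
  subst hc
  exact Monoid.not_exists_finite_monogenic_cover
    (Set.infinite_range_of_injective yPowX_injective) range_yPowX_inter_range_pow_subsingleton
end
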